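/- Let p : E → B be a hyperconnected restriction semifunctor between restriction categories. If α is a p-prone morphism of E such that p(α) is a partial isomorphism in B, then α is a partial isomorphism in E. -/
import Mathlib


open CategoryTheory

universe v₁ u₁ v₂ u₂ v₃ u₃

/-- A restriction category: a category equipped with a restriction combinator
satisfying the four restriction axioms [R.1]–[R.4]. -/
class RestrictionCategory (C : Type u₁) [Category.{v₁} C] where
  rest : ∀ {A B : C}, (A ⟶ B) → (A ⟶ A)
  rest_comp_self : ∀ {A B : C} (f : A ⟶ B), rest f ≫ f = f
  rest_comm : ∀ {A B C' : C} (f : A ⟶ B) (g : A ⟶ C'), rest f ≫ rest g = rest g ≫ rest f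
  rest_rest_comp : ∀ {A B C' : C} (f : A ⟶ B) (g : A ⟶ C'),
    rest (rest f ≫ g) = rest f ≫ rest g
  comp_rest : ∀ {A B C' : C} (f : A ⟶ B) (g : B ⟶ C'),
    f ≫ rest g = rest (f ≫ g) ≫ f

open RestrictionCategory

/-- A restriction semifunctor: preserves composition and restriction
(but not necessarily identities). -/
structure RestrictionSemifunctor (E : Type u₁) (B : Type u₂) [Category.{v₁} E]
    [Category.{v₂} B] [RestrictionCategory E] [RestrictionCategory B] where
  obj : E → B
  map : ∀ {X Y : E}, (X ⟶ Y) → (obj X ⟶ obj Y)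
  map_comp : ∀ {X Y Z : E} (f : X ⟶ Y) (g : Y ⟶ Z), map (f ≫ g) = map f ≫ map g
  map_rest : ∀ {X Y : E} (f : X ⟶ Y), map (rest f) = rest (map f)

variable {E : Type u₁} {B : Type u₂} [Category.{v₁} E] [Category.{v₂} B]
  [RestrictionCategory E] [RestrictionCategory B]

/-- A morphism `f' : X' ⟶ X` is `p`-prone if every precise triangle
`h ≫ p(f') = p(g)` in the base has a unique precise lifting. -/
def RestrictionSemifunctor.IsProne (p : RestrictionSemifunctor E B) {X' X : E}
    (f' : X' ⟶ X) : Prop :=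
  ∀ (Y : E) (g : Y ⟶ X) (h : p.obj Y ⟶ p.obj X'),
    h ≫ p.map f' = p.map g → rest h = rest (p.map g) →
    ∃! ht : Y ⟶ X', p.map ht = h ∧ ht ≫ f' = g ∧ rest ht = rest g

/-- A partial isomorphism: `f` with a partial inverse `g` satisfying
`f ≫ g = f̄` and `g ≫ f = ḡ`. -/
def IsPartialIso {C : Type u₃} [Category.{v₃} C] [RestrictionCategory C]
    {A B : C} (f : A ⟶ B) : Prop :=
  ∃ g : B ⟶ A, f ≫ g = rest f ∧ g ≫ f = rest g

/-- A restriction semifunctor is hyperconnected if, for each object `X` of `E`,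
`e ↦ p(e)` is a bijection from the restriction idempotents on `X` to the
restriction idempotents `d` on `p(X)` with `d ≫ p(𝟙 X) = d`. -/
def RestrictionSemifunctor.IsHyperconnected (p : RestrictionSemifunctor E B) : Prop :=
  ∀ X : E, Function.Bijective
    (fun e : {e : X ⟶ X // rest e = e} =>
      (⟨p.map e.1, by rw [← p.map_rest, e.2],
        by rw [← p.map_comp, Category.comp_id]⟩ :
        {d : p.obj X ⟶ p.obj X // rest d = d ∧ d ≫ p.map (𝟙 X) = d}))


lemma rest_id {C : Type u₃} [Category.{v₃} C] [RestrictionCategory C] (A : C) :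
    rest (𝟙 A) = 𝟙 A := by
  have := rest_comp_self (𝟙 A)
  rwa [Category.comp_id] at this

lemma rest_rest {C : Type u₃} [Category.{v₃} C] [RestrictionCategory C]
    {A B : C} (f : A ⟶ B) : rest (rest f) = rest f := by
  have h : rest f = rest f ≫ 𝟙 A := (Category.comp_id _).symm
  calc rest (rest f) = rest (rest f ≫ 𝟙 A) := by rw [← h]
    _ = rest f ≫ rest (𝟙 A) := rest_rest_comp f (𝟙 A)
    _ = rest f := by rw [rest_id, Category.comp_id]

/-- For a hyperconnected restriction semifunctor, a p-prone morphism over a partial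
isomorphism is a partial isomorphism. -/
theorem hyperconnected_prone_over_partialIso (p : RestrictionSemifunctor E B)
    (hhyp : p.IsHyperconnected) {X Y : E} (α : X ⟶ Y)
    (hprone : p.IsProne α) (hpiso : IsPartialIso (p.map α)) :
    IsPartialIso α := by

  obtain ⟨β, hβ1, hβ2⟩ := hpiso
  -- injectivity on restriction idempotents
  have inj : ∀ e₁ e₂ : X ⟶ X, rest e₁ = e₁ → rest e₂ = e₂ →
      p.map e₁ = p.map e₂ → e₁ = e₂ := by
    intro e₁ e₂ h₁ h₂ hmap
    have := (hhyp X).1 (a₁ := ⟨e₁, h₁⟩) (a₂ := ⟨e₂, h₂⟩) (by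
      apply Subtype.ext
      simpa using hmap)
    exact congrArg Subtype.val this
  -- rest β ≫ p.map (𝟙 Y) = rest β
  have hrb : rest β ≫ p.map (𝟙 Y) = rest β := by
    calc rest β ≫ p.map (𝟙 Y) = (β ≫ p.map α) ≫ p.map (𝟙 Y) := by rw [hβ2]
      _ = β ≫ (p.map α ≫ p.map (𝟙 Y)) := by rw [Category.assoc]
      _ = β ≫ p.map (α ≫ 𝟙 Y) := by rw [p.map_comp]
      _ = β ≫ p.map α := by rw [Category.comp_id]
      _ = rest β := hβ2
  -- find e : Y ⟶ Y with rest e = e and p.map e = rest β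
  obtain ⟨⟨e, he⟩, hpe⟩ := (hhyp Y).2 ⟨rest β, rest_rest β, hrb⟩
  have hpe' : p.map e = rest β := congrArg Subtype.val hpe
  -- lift β to gt : Y ⟶ X
  obtain ⟨gt, ⟨hg1, hg2, hg3⟩, -⟩ := hprone Y e β
    (by rw [hβ2, hpe']) (by rw [hpe', rest_rest])
  -- rest (α ≫ gt) = rest α
  have key : rest (α ≫ gt) = rest α := by
    apply inj _ _ (rest_rest _) (rest_rest _)
    rw [p.map_rest, p.map_rest, p.map_comp, hg1, hβ1, rest_rest]
  have hαe : α ≫ e = α := by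
    calc α ≫ e = α ≫ rest gt := by rw [hg3, he]
      _ = rest (α ≫ gt) ≫ α := comp_rest α gt
      _ = rest α ≫ α := by rw [key]
      _ = α := rest_comp_self α
  -- uniqueness of lifts of (α, rest (p.map α)) gives α ≫ gt = rest α
  obtain ⟨ht, -, huniq⟩ := hprone X α (rest (p.map α))
    (rest_comp_self _) (rest_rest _)
  have h1 : α ≫ gt = ht := huniq (α ≫ gt)
    ⟨by rw [p.map_comp, hg1, hβ1],
     by rw [Category.assoc, hg2, hαe],
     key⟩
  have h2 : rest α = ht := huniq (rest α)
    ⟨p.map_rest α, rest_comp_self α, rest_rest α⟩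
  exact ⟨gt, h1.trans h2.symm, by rw [hg2, ← he, hg3]⟩
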